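/- Let K ⊆ ℝ^n be a convex body and φ: K → (0,∞) continuous. Then the support function h_{M_δ(K,φ)}(θ), viewed as a function of (θ,δ) ∈ S^{n-1} × (0, ∫_K φ], extends continuously to δ = 0 with h_{M_0(K,φ)} = h_K, the support function of K. -/

import Mathlib

open MeasureTheory Metric Set
open scoped RealInnerProductSpace ENNReal Topology Pointwise

noncomputable def metronoid {n : ℕ} (μ : Measure (EuclideanSpace ℝ (Fin n))) :
    Set (EuclideanSpace ℝ (Fin n)) :=
  {z | ∃ f : EuclideanSpace ℝ (Fin n) → ℝ,
    (∀ y, 0 ≤ f y ∧ f y ≤ 1) ∧ Integrable f μ ∧ (∫ y, f y ∂μ) = 1 ∧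
    Integrable (fun y => f y • y) μ ∧ z = ∫ y, f y • y ∂μ}

/-- The weighted Ulam floating body `M_δ(K, φ)`. -/
noncomputable def ulamW {n : ℕ} (K : Set (EuclideanSpace ℝ (Fin n)))
    (φ : EuclideanSpace ℝ (Fin n) → ℝ) (δ : ℝ) : Set (EuclideanSpace ℝ (Fin n)) :=
  metronoid ((volume.restrict K).withDensity fun x => ENNReal.ofReal (φ x / δ))

/-- The support function of a set `L` in direction `θ`. -/
noncomputable def suppFn {n : ℕ} (L : Set (EuclideanSpace ℝ (Fin n)))
    (θ : EuclideanSpace ℝ (Fin n)) : ℝ :=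
  sSup ((fun x => ⟪x, θ⟫) '' L)

/-!
Let `ν = φ · 𝟙_K dx`. Then `M_δ(K, φ)` is the set of barycentres `δ⁻¹ ∫ f(y) y dν(y)` of the
densities `0 ≤ f ≤ 1` of `ν`-mass `δ`, so it lies in every ball and half-space containing `K`.
Hence `h_{M_δ}` is `R`-Lipschitz in `θ` uniformly in `δ` (for `K ⊆ B(0, R)`), and it suffices to
prove continuity in `δ` for fixed `θ`.

For `δ ≤ δ'`, rescaling `f` shows `M_{δ'} ⊆ M_δ`, while adding the mass `δ' - δ` proportionally
to `1 - f` moves a point of `M_δ` by at most `2R(δ' - δ)/δ'` into `M_{δ'}`; this gives Lipschitz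
continuity in `δ` away from `0`. At `δ = 0` we have `h_{M_δ} ≤ h_K`, and conversely the
`ν`-barycentre of a small ball around a near-maximiser of `⟪·, θ⟫` on `K` lies in `M_δ` for all
`δ` below the `ν`-mass of that ball, which is positive because `K` is convex with nonempty
interior and `φ > 0` on `K`.
-/

variable {n : ℕ}

section SupportFunction

variable {L L' : Set (EuclideanSpace ℝ (Fin n))} {x θ : EuclideanSpace ℝ (Fin n)} {R : ℝ}

theorem inner_le_mul_norm_of_mem_closedBall (hx : x ∈ closedBall 0 R)
    (v : EuclideanSpace ℝ (Fin n)) : ⟪x, v⟫ ≤ R * ‖v‖ :=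
  (real_inner_le_norm x v).trans
    (mul_le_mul_of_nonneg_right (mem_closedBall_zero_iff.1 hx) (norm_nonneg v))

theorem bddAbove_inner_image_of_subset_closedBall (hR : L ⊆ closedBall 0 R) :
    BddAbove ((fun x => ⟪x, θ⟫) '' L) :=
  ⟨R * ‖θ‖, forall_mem_image.2 fun _ hx => inner_le_mul_norm_of_mem_closedBall (hR hx) θ⟩

theorem le_suppFn (hL : BddAbove ((fun x => ⟪x, θ⟫) '' L)) (hx : x ∈ L) :
    ⟪x, θ⟫ ≤ suppFn L θ :=
  le_csSup hL (mem_image_of_mem _ hx)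

theorem suppFn_le (hL : L.Nonempty) {a : ℝ} (h : ∀ x ∈ L, ⟪x, θ⟫ ≤ a) : suppFn L θ ≤ a :=
  csSup_le (hL.image _) (forall_mem_image.2 h)

theorem suppFn_mono (hLL' : L ⊆ L') (hL : L.Nonempty) (hL' : BddAbove ((fun x => ⟪x, θ⟫) '' L')) :
    suppFn L θ ≤ suppFn L' θ :=
  csSup_le_csSup hL' (hL.image _) (image_mono hLL')

theorem suppFn_le_add_of_forall_exists_norm_sub_le (hL : L.Nonempty)
    (hL' : BddAbove ((fun x => ⟪x, θ⟫) '' L')) {d : ℝ}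
    (h : ∀ x ∈ L, ∃ x' ∈ L', ‖x - x'‖ ≤ d) : suppFn L θ ≤ suppFn L' θ + d * ‖θ‖ :=
  suppFn_le hL fun x hx => by
    obtain ⟨x', hx', hxx'⟩ := h x hx
    calc ⟪x, θ⟫ = ⟪x', θ⟫ + ⟪x - x', θ⟫ := by rw [inner_sub_left]; ring
      _ ≤ suppFn L' θ + d * ‖θ‖ :=
        add_le_add (le_suppFn hL' hx') ((real_inner_le_norm _ _).trans (by gcongr))

theorem lipschitzWith_suppFn (hR : L ⊆ closedBall 0 R) (hL : L.Nonempty) :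
    LipschitzWith R.toNNReal (suppFn L) :=
  LipschitzWith.of_le_add_mul' R fun θ θ' => suppFn_le hL fun x hx =>
    calc ⟪x, θ⟫ = ⟪x, θ'⟫ + ⟪x, θ - θ'⟫ := by rw [inner_sub_right]; ring
      _ ≤ suppFn L θ' + R * dist θ θ' := by
        rw [dist_eq_norm]
        exact add_le_add (le_suppFn (bddAbove_inner_image_of_subset_closedBall hR) hx)
          (inner_le_mul_norm_of_mem_closedBall (hR hx) _)

end SupportFunction

noncomputable def floatingBody (ν : Measure (EuclideanSpace ℝ (Fin n))) (δ : ℝ) :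
    Set (EuclideanSpace ℝ (Fin n)) :=
  {z | ∃ f : EuclideanSpace ℝ (Fin n) → ℝ,
    (∀ y, 0 ≤ f y ∧ f y ≤ 1) ∧ Integrable f ν ∧ ∫ y, f y ∂ν = δ ∧
    Integrable (fun y => f y • y) ν ∧ z = δ⁻¹ • ∫ y, f y • y ∂ν}

section FloatingBody

variable {ν : Measure (EuclideanSpace ℝ (Fin n))} {f : EuclideanSpace ℝ (Fin n) → ℝ}
  {z θ : EuclideanSpace ℝ (Fin n)} {R a δ δ' : ℝ}

theorem integrable_of_unitInterval [IsFiniteMeasure ν] (hf : ∀ y, 0 ≤ f y ∧ f y ≤ 1)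
    (hfm : AEStronglyMeasurable f ν) : Integrable f ν :=
  (integrable_const 1).mono' hfm <| ae_of_all _ fun y => by
    rw [Real.norm_of_nonneg (hf y).1]; exact (hf y).2

theorem integrable_smul_self_of_unitInterval [IsFiniteMeasure ν] (hνR : ∀ᵐ y ∂ν, ‖y‖ ≤ R)
    (hf : ∀ y, 0 ≤ f y ∧ f y ≤ 1) (hfm : AEStronglyMeasurable f ν) :
    Integrable (fun y => f y • y) ν :=
  (integrable_const R).mono' (hfm.smul aestronglyMeasurable_id) <| hνR.mono fun y hy => by
    rw [norm_smul, Real.norm_of_nonneg (hf y).1]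
    exact (mul_le_of_le_one_left (norm_nonneg y) (hf y).2).trans hy

theorem smul_integral_mem_floatingBody [IsFiniteMeasure ν] (hνR : ∀ᵐ y ∂ν, ‖y‖ ≤ R)
    (hf : ∀ y, 0 ≤ f y ∧ f y ≤ 1) (hfm : AEStronglyMeasurable f ν) (hfδ : ∫ y, f y ∂ν = δ) :
    δ⁻¹ • ∫ y, f y • y ∂ν ∈ floatingBody ν δ :=
  ⟨f, hf, integrable_of_unitInterval hf hfm, hfδ,
    integrable_smul_self_of_unitInterval hνR hf hfm, rfl⟩

theorem norm_integral_smul_self_le (hνR : ∀ᵐ y ∂ν, ‖y‖ ≤ R) (hf : ∀ y, 0 ≤ f y)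
    (hfi : Integrable f ν) : ‖∫ y, f y • y ∂ν‖ ≤ R * ∫ y, f y ∂ν := by
  rw [← integral_const_mul]
  refine norm_integral_le_of_norm_le (hfi.const_mul R) (hνR.mono fun y hy => ?_)
  rw [norm_smul, Real.norm_of_nonneg (hf y), mul_comm]
  exact mul_le_mul_of_nonneg_right hy (hf y)

theorem floatingBody_subset_closedBall (hνR : ∀ᵐ y ∂ν, ‖y‖ ≤ R) (hδ : 0 < δ) :
    floatingBody ν δ ⊆ closedBall 0 R := by
  rintro _ ⟨f, hf, hfi, hfδ, -, rfl⟩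
  have hnorm := norm_integral_smul_self_le hνR (fun y => (hf y).1) hfi
  rw [hfδ] at hnorm
  rw [mem_closedBall_zero_iff, norm_smul, Real.norm_of_nonneg (inv_nonneg.2 hδ.le),
    inv_mul_le_iff₀ hδ, mul_comm]
  exact hnorm

theorem inner_le_of_mem_floatingBody (hνθ : ∀ᵐ y ∂ν, ⟪y, θ⟫ ≤ a) (hδ : 0 < δ)
    (hz : z ∈ floatingBody ν δ) : ⟪z, θ⟫ ≤ a := by
  obtain ⟨f, hf, hfi, hfδ, hfyi, rfl⟩ := hz
  rw [real_inner_smul_left, real_inner_comm, ← integral_inner hfyi θ, inv_mul_le_iff₀ hδ]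
  calc ∫ y, ⟪θ, f y • y⟫ ∂ν ≤ ∫ y, f y * a ∂ν := by
        refine integral_mono_ae (hfyi.const_inner θ) (hfi.mul_const a) (hνθ.mono fun y hy => ?_)
        dsimp only
        rw [real_inner_smul_right, real_inner_comm]
        exact mul_le_mul_of_nonneg_left hy (hf y).1
    _ = δ * a := by rw [integral_mul_const, hfδ]

theorem floatingBody_antitone (hδ' : 0 < δ') (hle : δ' ≤ δ) :
    floatingBody ν δ ⊆ floatingBody ν δ' := by
  rintro _ ⟨f, hf, hfi, hfδ, hfyi, rfl⟩
  have hδ : 0 < δ := hδ'.trans_le hle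
  have hc0 : 0 ≤ δ' / δ := by positivity
  have hc1 : δ' / δ ≤ 1 := (div_le_one hδ).2 hle
  refine ⟨fun y => δ' / δ * f y,
    fun y => ⟨mul_nonneg hc0 (hf y).1, mul_le_one₀ hc1 (hf y).1 (hf y).2⟩, hfi.const_mul _,
    ?_, ?_, ?_⟩
  · rw [integral_const_mul, hfδ]; field_simp
  · simp_rw [mul_smul]; exact hfyi.smul (δ' / δ)
  · simp_rw [mul_smul]
    rw [integral_smul, smul_smul]
    congr 1
    field_simp

theorem exists_mem_floatingBody_norm_sub_le [IsFiniteMeasure ν] (hνR : ∀ᵐ y ∂ν, ‖y‖ ≤ R)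
    (hδ : 0 < δ) (hle : δ ≤ δ') (hδ'ν : δ' ≤ ν.real univ) (hz : z ∈ floatingBody ν δ) :
    ∃ z' ∈ floatingBody ν δ', ‖z - z'‖ ≤ 2 * R * (δ' - δ) / δ' := by
  rcases hle.eq_or_lt with rfl | hlt
  · exact ⟨z, hz, by simp⟩
  have hzR : ‖z‖ ≤ R := mem_closedBall_zero_iff.1 (floatingBody_subset_closedBall hνR hδ hz)
  obtain ⟨f, hf, hfi, hfδ, hfyi, rfl⟩ := hz
  have hδ' : 0 < δ' := hδ.trans hlt
  -- the extra mass `δ' - δ` is spread over `ν` proportionally to `1 - f`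
  set c := (δ' - δ) / (ν.real univ - δ)
  have hc0 : 0 ≤ c := div_nonneg (by linarith) (by linarith)
  have hc1 : c ≤ 1 := (div_le_one (by linarith)).2 (by linarith)
  set g : EuclideanSpace ℝ (Fin n) → ℝ := fun y => c * (1 - f y)
  have hg : ∀ y, 0 ≤ g y ∧ g y ≤ 1 := fun y =>
    ⟨mul_nonneg hc0 (sub_nonneg.2 (hf y).2),
      mul_le_one₀ hc1 (sub_nonneg.2 (hf y).2) (by linarith [(hf y).1])⟩
  have hgi : Integrable g ν := ((integrable_const 1).sub hfi).const_mul c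
  have hgδ : ∫ y, g y ∂ν = δ' - δ := by
    rw [integral_const_mul, integral_sub (integrable_const 1) hfi, integral_const, smul_eq_mul,
      mul_one, hfδ]
    exact div_mul_cancel₀ _ (by linarith)
  have hgyi := integrable_smul_self_of_unitInterval hνR hg hgi.aestronglyMeasurable
  have hw : ‖∫ y, g y • y ∂ν‖ ≤ R * (δ' - δ) :=
    hgδ ▸ norm_integral_smul_self_le hνR (fun y => (hg y).1) hgi
  have hfg : ∀ y, 0 ≤ f y + g y ∧ f y + g y ≤ 1 := fun y => by
    constructor <;> nlinarith [hf y, hg y]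
  refine ⟨δ'⁻¹ • ∫ y, (f y + g y) • y ∂ν, smul_integral_mem_floatingBody hνR hfg
    (hfi.add hgi).aestronglyMeasurable (by rw [integral_add hfi hgi, hfδ, hgδ]; ring), ?_⟩
  have hdiff : δ⁻¹ • ∫ y, f y • y ∂ν - δ'⁻¹ • ∫ y, (f y + g y) • y ∂ν
      = δ'⁻¹ • ((δ' - δ) • δ⁻¹ • ∫ y, f y • y ∂ν - ∫ y, g y • y ∂ν) := by
    simp_rw [add_smul]
    rw [integral_add hfyi hgyi]
    match_scalars <;> field_simp
  rw [hdiff, norm_smul, Real.norm_of_nonneg (inv_nonneg.2 hδ'.le), inv_mul_le_iff₀ hδ']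
  calc ‖(δ' - δ) • δ⁻¹ • ∫ y, f y • y ∂ν - ∫ y, g y • y ∂ν‖
      ≤ (δ' - δ) * R + R * (δ' - δ) := by
        refine (norm_sub_le _ _).trans (add_le_add ?_ hw)
        rw [norm_smul, Real.norm_of_nonneg (by linarith)]
        exact mul_le_mul_of_nonneg_left hzR (by linarith)
    _ = δ' * (2 * R * (δ' - δ) / δ') := by field_simp; ring

theorem setAverage_mem_floatingBody [IsFiniteMeasure ν] (hνR : ∀ᵐ y ∂ν, ‖y‖ ≤ R)
    {B : Set (EuclideanSpace ℝ (Fin n))} (hB : MeasurableSet B) (hδ : 0 < δ)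
    (hδB : δ ≤ ν.real B) : ⨍ y in B, y ∂ν ∈ floatingBody ν δ := by
  have hB0 : 0 < ν.real B := hδ.trans_le hδB
  have hf : ∀ y, 0 ≤ B.indicator (fun _ => δ / ν.real B) y ∧
      B.indicator (fun _ => δ / ν.real B) y ≤ 1 := fun y => by
    by_cases hy : y ∈ B
    · simpa [hy] using ⟨by positivity, (div_le_one hB0).2 hδB⟩
    · simp [hy]
  have hmass : ∫ y, B.indicator (fun _ => δ / ν.real B) y ∂ν = δ := by
    rw [integral_indicator_const _ hB, smul_eq_mul]
    field_simp
  convert smul_integral_mem_floatingBody hνR hf (aestronglyMeasurable_const.indicator hB) hmass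
    using 1
  have hind : (fun y => B.indicator (fun _ => δ / ν.real B) y • y)
      = B.indicator fun y => (δ / ν.real B) • y :=
    (indicator_smul_left B _ id).symm
  rw [hind, integral_indicator hB, integral_smul, smul_smul, setAverage_eq]
  congr 1
  field_simp

theorem floatingBody_nonempty [IsFiniteMeasure ν] (hνR : ∀ᵐ y ∂ν, ‖y‖ ≤ R) (hδ : 0 < δ)
    (hδν : δ ≤ ν.real univ) : (floatingBody ν δ).Nonempty :=
  ⟨_, setAverage_mem_floatingBody hνR MeasurableSet.univ hδ hδν⟩

end FloatingBody

section Continuity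

variable {ν : Measure (EuclideanSpace ℝ (Fin n))} [IsFiniteMeasure ν]
  {K : Set (EuclideanSpace ℝ (Fin n))} {θ : EuclideanSpace ℝ (Fin n)} {R : ℝ}

theorem lipschitzOnWith_suppFn_floatingBody (hνR : ∀ᵐ y ∂ν, ‖y‖ ≤ R) {a : ℝ} (ha : 0 < a) :
    LipschitzOnWith (2 * R * ‖θ‖ / a).toNNReal (fun δ => suppFn (floatingBody ν δ) θ)
      (Icc a (ν.real univ)) := by
  refine LipschitzOnWith.of_le_add_mul' _ fun δ hδ δ' hδ' => ?_
  have hpos : ∀ {δ}, δ ∈ Icc a (ν.real univ) → 0 < δ := fun h => ha.trans_le h.1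
  have hbdd : ∀ {δ}, δ ∈ Icc a (ν.real univ) →
      BddAbove ((fun x => ⟪x, θ⟫) '' floatingBody ν δ) := fun h =>
    bddAbove_inner_image_of_subset_closedBall (floatingBody_subset_closedBall hνR (hpos h))
  have hne : ∀ {δ}, δ ∈ Icc a (ν.real univ) → (floatingBody ν δ).Nonempty :=
    fun h => floatingBody_nonempty hνR (hpos h) h.2
  have hR : 0 ≤ R := by
    obtain ⟨z, hz⟩ := hne hδ
    exact (norm_nonneg z).trans
      (mem_closedBall_zero_iff.1 (floatingBody_subset_closedBall hνR (hpos hδ) hz))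
  rcases le_total δ δ' with hle | hle
  · calc suppFn (floatingBody ν δ) θ
        ≤ suppFn (floatingBody ν δ') θ + 2 * R * (δ' - δ) / δ' * ‖θ‖ :=
          suppFn_le_add_of_forall_exists_norm_sub_le (hne hδ) (hbdd hδ') fun z hz =>
            exists_mem_floatingBody_norm_sub_le hνR (hpos hδ) hle hδ'.2 hz
      _ = suppFn (floatingBody ν δ') θ + 2 * R * ‖θ‖ * (δ' - δ) / δ' := by ring
      _ ≤ suppFn (floatingBody ν δ') θ + 2 * R * ‖θ‖ * (δ' - δ) / a := by
          have hnum : 0 ≤ 2 * R * ‖θ‖ * (δ' - δ) := by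
            have := norm_nonneg θ
            have : 0 ≤ δ' - δ := by linarith
            positivity
          exact add_le_add_right (div_le_div_of_nonneg_left hnum ha hδ'.1) _
      _ = suppFn (floatingBody ν δ') θ + 2 * R * ‖θ‖ / a * dist δ δ' := by
          rw [Real.dist_eq, abs_of_nonpos (by linarith)]; ring
  · calc suppFn (floatingBody ν δ) θ ≤ suppFn (floatingBody ν δ') θ :=
          suppFn_mono (floatingBody_antitone (hpos hδ') hle) (hne hδ) (hbdd hδ')
      _ ≤ suppFn (floatingBody ν δ') θ + 2 * R * ‖θ‖ / a * dist δ δ' := by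
          have : 0 ≤ 2 * R * ‖θ‖ / a * dist δ δ' := by positivity
          linarith

theorem continuousWithinAt_suppFn_floatingBody_zero (hKR : K ⊆ closedBall 0 R)
    (hK : K.Nonempty) (hνK : ∀ᵐ y ∂ν, y ∈ K) (hνpos : ∀ x ∈ K, ∀ ε > 0, 0 < ν (ball x ε)) :
    ContinuousWithinAt (fun δ => if δ = 0 then suppFn K θ else suppFn (floatingBody ν δ) θ)
      (Icc 0 (ν.real univ)) 0 := by
  have hνR : ∀ᵐ y ∂ν, ‖y‖ ≤ R := hνK.mono fun y hy => mem_closedBall_zero_iff.1 (hKR hy)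
  have hbdd := bddAbove_inner_image_of_subset_closedBall (θ := θ) hKR
  rw [ContinuousWithinAt, if_pos rfl]
  refine tendsto_order.2 ⟨fun a ha => ?_, fun a ha => ?_⟩
  · obtain ⟨_, ⟨x, hxK, rfl⟩, hax⟩ := exists_lt_of_lt_csSup (hK.image _) ha
    have hopen : IsOpen {z | a < ⟪z, θ⟫} := isOpen_lt continuous_const (by fun_prop)
    obtain ⟨ε, hε, hεa⟩ := nhds_basis_closedBall.mem_iff.1 (hopen.mem_nhds hax)
    have hνε : 0 < ν.real (ball x ε) :=
      ENNReal.toReal_pos (hνpos x hxK ε hε).ne' (measure_ne_top _ _)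
    have hbar : ⨍ y in ball x ε, y ∂ν ∈ closedBall x ε :=
      (convex_closedBall x ε).set_average_mem isClosed_closedBall (hνpos x hxK ε hε).ne'
        (measure_ne_top _ _)
        (ae_restrict_of_forall_mem measurableSet_ball fun _ hy => ball_subset_closedBall hy)
        ((integrable_const R).mono' aestronglyMeasurable_id hνR).integrableOn
    filter_upwards [self_mem_nhdsWithin, nhdsWithin_le_nhds (Iio_mem_nhds hνε)] with δ hδ hδε
    rcases hδ.1.eq_or_lt with rfl | hδ0
    · rwa [if_pos rfl]
    · rw [if_neg hδ0.ne']
      exact (hεa hbar).trans_le (le_suppFn (bddAbove_inner_image_of_subset_closedBall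
        (floatingBody_subset_closedBall hνR hδ0))
        (setAverage_mem_floatingBody hνR measurableSet_ball hδ0 hδε.le))
  · filter_upwards [self_mem_nhdsWithin] with δ hδ
    refine lt_of_le_of_lt ?_ ha
    rcases hδ.1.eq_or_lt with rfl | hδ0
    · rw [if_pos rfl]
    · rw [if_neg hδ0.ne']
      exact suppFn_le (floatingBody_nonempty hνR hδ0 hδ.2) fun z hz =>
        inner_le_of_mem_floatingBody (hνK.mono fun y hy => le_suppFn hbdd hy) hδ0 hz

theorem continuousOn_suppFn_floatingBody (hKR : K ⊆ closedBall 0 R) (hK : K.Nonempty)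
    (hνK : ∀ᵐ y ∂ν, y ∈ K) (hνpos : ∀ x ∈ K, ∀ ε > 0, 0 < ν (ball x ε)) :
    ContinuousOn (fun δ => if δ = 0 then suppFn K θ else suppFn (floatingBody ν δ) θ)
      (Icc 0 (ν.real univ)) := by
  intro δ₀ hδ₀
  rcases hδ₀.1.eq_or_lt with rfl | hδ₀pos
  · exact continuousWithinAt_suppFn_floatingBody_zero hKR hK hνK hνpos
  have hνR : ∀ᵐ y ∂ν, ‖y‖ ≤ R := hνK.mono fun y hy => mem_closedBall_zero_iff.1 (hKR hy)
  have hnhds : Icc (δ₀ / 2) (ν.real univ) ∈ 𝓝[Icc 0 (ν.real univ)] δ₀ :=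
    mem_nhdsWithin.2 ⟨Ioi (δ₀ / 2), isOpen_Ioi, half_lt_self hδ₀pos,
      fun δ hδ => ⟨le_of_lt hδ.1, hδ.2.2⟩⟩
  refine ContinuousWithinAt.mono_of_mem_nhdsWithin ?_ hnhds
  refine ((lipschitzOnWith_suppFn_floatingBody hνR (half_pos hδ₀pos)).continuousOn δ₀
    ⟨by linarith, hδ₀.2⟩).congr (fun δ hδ => if_neg ?_) (if_neg hδ₀pos.ne')
  linarith [hδ.1]

end Continuity

noncomputable def weightedVolume (K : Set (EuclideanSpace ℝ (Fin n)))
    (φ : EuclideanSpace ℝ (Fin n) → ℝ) : Measure (EuclideanSpace ℝ (Fin n)) :=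
  (volume.restrict K).withDensity fun x => ENNReal.ofReal (φ x)

section WeightedVolume

variable {K : Set (EuclideanSpace ℝ (Fin n))} {φ : EuclideanSpace ℝ (Fin n) → ℝ}

theorem ulamW_eq_floatingBody {δ : ℝ} (hδ : 0 < δ) :
    ulamW K φ δ = floatingBody (weightedVolume K φ) δ := by
  have hc0 : (ENNReal.ofReal δ)⁻¹ ≠ 0 := by simp
  have hct : (ENNReal.ofReal δ)⁻¹ ≠ ∞ := by simpa using hδ
  have hcr : ((ENNReal.ofReal δ)⁻¹).toReal = δ⁻¹ := by
    rw [ENNReal.toReal_inv, ENNReal.toReal_ofReal hδ.le]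
  have hscale : (volume.restrict K).withDensity (fun x => ENNReal.ofReal (φ x / δ))
      = (ENNReal.ofReal δ)⁻¹ • weightedVolume K φ := by
    rw [weightedVolume, ← withDensity_smul' _ _ hct]
    congr 1
    funext x
    rw [Pi.smul_apply, smul_eq_mul, div_eq_inv_mul, ENNReal.ofReal_mul (by positivity),
      ENNReal.ofReal_inv_of_pos hδ]
  ext z
  simp only [ulamW, metronoid, floatingBody, hscale, integrable_smul_measure hc0 hct,
    integral_smul_measure, hcr, smul_eq_mul, inv_mul_eq_one₀ hδ.ne', eq_comm (a := δ)]

theorem isFiniteMeasure_weightedVolume (hK : IsCompact K) (hφ : ContinuousOn φ K) :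
    IsFiniteMeasure (weightedVolume K φ) :=
  isFiniteMeasure_withDensity_ofReal (hφ.integrableOn_compact hK).hasFiniteIntegral

theorem weightedVolume_real_univ (hK : IsCompact K) (hφ0 : ∀ x ∈ K, 0 ≤ φ x)
    (hφ : ContinuousOn φ K) : (weightedVolume K φ).real univ = ∫ x in K, φ x := by
  rw [measureReal_def, weightedVolume, withDensity_apply _ MeasurableSet.univ,
    Measure.restrict_univ, ← ofReal_integral_eq_lintegral_ofReal (hφ.integrableOn_compact hK)
      ((ae_restrict_mem hK.measurableSet).mono hφ0),
    ENNReal.toReal_ofReal (setIntegral_nonneg hK.measurableSet hφ0)]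

theorem ae_mem_weightedVolume (hK : MeasurableSet K) : ∀ᵐ y ∂weightedVolume K φ, y ∈ K :=
  (withDensity_absolutelyContinuous _ _).ae_le (ae_restrict_mem hK)

theorem weightedVolume_ball_pos (hKc : Convex ℝ K) (hKi : (interior K).Nonempty)
    (hK : MeasurableSet K) (hφpos : ∀ x ∈ K, 0 < φ x) (hφ : ContinuousOn φ K)
    {x : EuclideanSpace ℝ (Fin n)} (hx : x ∈ K) {ε : ℝ} (hε : 0 < ε) :
    0 < weightedVolume K φ (ball x ε) := by
  have hac : volume.restrict K ≪ weightedVolume K φ :=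
    withDensity_absolutelyContinuous' (hφ.aemeasurable hK).ennreal_ofReal
      ((ae_restrict_mem hK).mono fun y hy => by simpa using hφpos y hy)
  have hxcl : x ∈ closure (interior K) := by
    rw [hKc.closure_interior_eq_closure_of_nonempty_interior hKi]
    exact subset_closure hx
  set U := ball x ε ∩ interior K
  have hU : IsOpen U := isOpen_ball.inter isOpen_interior
  have hUK : U ⊆ K := inter_subset_right.trans interior_subset
  have hUvol : 0 < volume.restrict K U := by
    rw [Measure.restrict_apply hU.measurableSet, inter_eq_left.2 hUK]
    exact hU.measure_pos volume (mem_closure_iff.1 hxcl _ isOpen_ball (mem_ball_self hε))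
  exact (pos_iff_ne_zero.2 fun h => hUvol.ne' (hac h)).trans_le (measure_mono inter_subset_left)

end WeightedVolume

/-- The support function `h_{M_δ(K,φ)}(θ)`, as a function of `(θ, δ)`, extends
continuously to `δ = 0` on `S^{n-1} × [0, ∫_K φ]`, with value `h_K(θ)` at `δ = 0`. -/
theorem stmt4 (n : ℕ) (K : Set (EuclideanSpace ℝ (Fin n)))
    (hK : IsCompact K) (hKc : Convex ℝ K) (hKi : (interior K).Nonempty)
    (φ : EuclideanSpace ℝ (Fin n) → ℝ) (hφpos : ∀ x ∈ K, 0 < φ x)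
    (hφcont : ContinuousOn φ K) :
    ContinuousOn
      (fun p : EuclideanSpace ℝ (Fin n) × ℝ =>
        if p.2 = 0 then suppFn K p.1 else suppFn (ulamW K φ p.2) p.1)
      (Metric.sphere 0 1 ×ˢ Set.Icc 0 (∫ x in K, φ x)) := by
  have := isFiniteMeasure_weightedVolume hK hφcont
  have hKne : K.Nonempty := hKi.mono interior_subset
  obtain ⟨R, hR⟩ := hK.isBounded.subset_closedBall 0
  have hνK := ae_mem_weightedVolume (φ := φ) hK.measurableSet
  have hνR : ∀ᵐ y ∂weightedVolume K φ, ‖y‖ ≤ R :=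
    hνK.mono fun y hy => mem_closedBall_zero_iff.1 (hR hy)
  have hνpos x (hx : x ∈ K) ε (hε : 0 < ε) : 0 < weightedVolume K φ (ball x ε) :=
    weightedVolume_ball_pos hKc hKi hK.measurableSet hφpos hφcont hx hε
  rw [← weightedVolume_real_univ hK (fun x hx => (hφpos x hx).le) hφcont]
  refine continuousOn_prod_of_continuousOn_lipschitzOnWith _ R.toNNReal (fun θ _ => ?_)
    fun δ hδ => ?_
  · refine (continuousOn_suppFn_floatingBody hR hKne hνK hνpos (θ := θ)).congr fun δ hδ => ?_
    rcases hδ.1.eq_or_lt with rfl | hδpos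
    · simp only [↓reduceIte]
    · simp only [if_neg hδpos.ne', ulamW_eq_floatingBody hδpos]
  · rcases hδ.1.eq_or_lt with rfl | hδpos
    · simpa only [↓reduceIte] using (lipschitzWith_suppFn hR hKne).lipschitzOnWith
    · simpa only [if_neg hδpos.ne', ulamW_eq_floatingBody hδpos] using
        (lipschitzWith_suppFn (floatingBody_subset_closedBall hνR hδpos)
          (floatingBody_nonempty hνR hδpos hδ.2)).lipschitzOnWith
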